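/- arXiv:2012.11862 — 4 statements merged into one kernel-verified Lean document; each statement's English description precedes it below -/
import Mathlib

section
/- Let (X,d) be a metric space and μ a Borel measure on X, and let N > 1 be a real number. Assume that (X,d,μ) satisfies the N-Brunn–Minkowski inequality, that μ(B_x(r)) < ∞ for every x ∈ X and r > 0, and that there exists θ > 0 such that for every x ∈ X the ratio μ(B_x(R))/(ω_N R^N) converges to θ as R → ∞. Then for every nonempty bounded Borel subset Ω ⊆ X with 0 < μ(Ω) < ∞ one has μ⁺(Ω) ≥ N · ω_N^{1/N} · θ^{1/N} · μ(Ω)^{(N−1)/N}. -/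
open MeasureTheory Metric Filter Set
open scoped Topology ENNReal

/-- The constant `ω_N = π^{N/2} / Γ(1 + N/2)`. -/
noncomputable def omegaN (N : ℝ) : ℝ := Real.pi ^ (N / 2) / Real.Gamma (1 + N / 2)

/-- The `ε`-neighborhood `Ω_ε = {x : ∃ y ∈ Ω, d(x,y) < ε}`. -/
def eNbhd {X : Type*} [MetricSpace X] (Ω : Set X) (ε : ℝ) : Set X :=
  {x | ∃ y ∈ Ω, dist x y < ε}

/-- The Minkowski content `μ⁺(Ω) = liminf_{ε → 0⁺} μ(Ω_ε \ Ω)/ε`. -/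
noncomputable def minkowskiContent {X : Type*} [MetricSpace X] [MeasurableSpace X]
    (μ : Measure X) (Ω : Set X) : ℝ≥0∞ :=
  Filter.liminf (fun ε : ℝ => μ (eNbhd Ω ε \ Ω) / ENNReal.ofReal ε) (𝓝[>] (0 : ℝ))

/-- The `s`-interpolant set `Z_s(A,B)`. -/
def interpSet {X : Type*} [MetricSpace X] (s : ℝ) (A B : Set X) : Set X :=
  ⋃ x ∈ A, ⋃ y ∈ B,
    {z | dist x z = s * dist x y ∧ dist z y = (1 - s) * dist x y}

/-- The `N`-Brunn–Minkowski inequality: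
`μ(Z_s(A,B))^{1/N} ≥ (1-s) μ(A)^{1/N} + s μ(B)^{1/N}`. -/
def NBrunnMinkowski {X : Type*} [MetricSpace X] [MeasurableSpace X]
    (μ : Measure X) (N : ℝ) : Prop :=
  ∀ A B : Set X, MeasurableSet A → MeasurableSet B → 0 < μ A → 0 < μ B →
    ∀ s ∈ Set.Icc (0 : ℝ) 1,
      ENNReal.ofReal (1 - s) * μ A ^ (1 / N) + ENNReal.ofReal s * μ B ^ (1 / N)
        ≤ μ (interpSet s A B) ^ (1 / N)


/-! Put `Ω ⊆ B_{x₀}(D)` and take `R ≥ D`. For `0 < ε < D + R` and `s = ε / (D + R)`, every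
`s`-interpolant between `Ω` and `B_{x₀}(R)` lies within `ε` of `Ω`, so Brunn–Minkowski and the
tangent line of `t ↦ t ^ N` at `μ(Ω)^{1/N}` give
`μ(Ω_ε \ Ω) ≥ ε · N μ(Ω)^{(N-1)/N} (μ(B_{x₀}(R))^{1/N} - μ(Ω)^{1/N}) / (D + R)`.
Euclidean volume growth makes the last factor tend to `(ω_N θ)^{1/N}` as `R → ∞`. -/

lemma rpow_tangent_line_le {A c N : ℝ} (hA : 0 < A) (hc : 0 ≤ c) (hN : 1 ≤ N) :
    A ^ N + N * A ^ (N - 1) * (c - A) ≤ c ^ N := by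
  have hbern := one_add_mul_self_le_rpow_one_add
    (by linarith [div_nonneg hc hA.le] : -1 ≤ c / A - 1) hN
  rw [add_sub_cancel, Real.div_rpow hc hA.le, le_div_iff₀ (by positivity)] at hbern
  calc A ^ N + N * A ^ (N - 1) * (c - A) = (1 + N * (c / A - 1)) * A ^ N := by
        rw [Real.rpow_sub hA, Real.rpow_one]
        field_simp
    _ ≤ c ^ N := hbern

lemma tendsto_sub_div_add_of_tendsto_div {g : ℝ → ℝ} {L : ℝ} (c D : ℝ)
    (h : Tendsto (fun R => g R / R) atTop (𝓝 L)) :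
    Tendsto (fun R => (g R - c) / (D + R)) atTop (𝓝 L) := by
  have hDR : Tendsto (fun R : ℝ => D + R) atTop atTop :=
    tendsto_atTop_add_const_left _ D tendsto_id
  have hratio : Tendsto (fun R : ℝ => 1 - D / (D + R)) atTop (𝓝 (1 - 0)) :=
    tendsto_const_nhds.sub (tendsto_const_nhds.div_atTop hDR)
  have hlim := (h.mul hratio).sub ((tendsto_const_nhds (x := c)).div_atTop hDR)
  simp only [sub_zero, mul_one] at hlim
  refine hlim.congr' ?_
  filter_upwards [eventually_gt_atTop 0, eventually_gt_atTop (-D)] with R hR hDR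
  have : D + R ≠ 0 := by linarith
  field_simp
  ring

lemma tendsto_rpow_inv_div_of_tendsto_div_rpow {f : ℝ → ℝ} {ω θ N : ℝ} (hN : 0 < N)
    (hω : 0 < ω) (hf : ∀ R, 0 ≤ f R) (h : Tendsto (fun R => f R / (ω * R ^ N)) atTop (𝓝 θ)) :
    Tendsto (fun R => f R ^ (1 / N) / R) atTop (𝓝 (ω ^ (1 / N) * θ ^ (1 / N))) := by
  refine ((h.rpow_const (Or.inr (by positivity))).const_mul (ω ^ (1 / N))).congr' ?_
  filter_upwards [eventually_gt_atTop 0] with R hR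
  have hRN : (R ^ N) ^ (1 / N) = R := by
    rw [← Real.rpow_mul hR.le, mul_one_div_cancel hN.ne', Real.rpow_one]
  rw [Real.div_rpow (hf R) (by positivity), Real.mul_rpow hω.le (by positivity), hRN]
  have : 0 < ω ^ (1 / N) := by positivity
  field_simp

section Neighborhoods

variable {X : Type*} [MetricSpace X] {Ω : Set X} {x₀ : X} {D : ℝ}

lemma eNbhd_subset_ball (hΩ : Ω ⊆ ball x₀ D) (ε : ℝ) : eNbhd Ω ε ⊆ ball x₀ (D + ε) := by
  rintro z ⟨y, hy, hzy⟩
  have := hΩ hy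
  rw [mem_ball] at this ⊢
  linarith [dist_triangle z y x₀]

lemma interpSet_ball_subset_eNbhd (hΩ : Ω ⊆ ball x₀ D) {s : ℝ} (hs : 0 < s) (R : ℝ) :
    interpSet s Ω (ball x₀ R) ⊆ eNbhd Ω (s * (D + R)) := by
  intro z hz
  simp only [interpSet, mem_iUnion, exists_prop] at hz
  obtain ⟨x, hx, y, hy, hxz, -⟩ := hz
  refine ⟨x, hx, ?_⟩
  have hxy : dist x y < D + R := by
    linarith [dist_triangle x x₀ y, mem_ball.1 (hΩ hx), mem_ball'.1 hy]
  rw [dist_comm, hxz]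
  exact mul_lt_mul_of_pos_left hxy hs

end Neighborhoods

section Measure

variable {X : Type*} [MetricSpace X] [MeasurableSpace X] {μ : Measure X} {Ω : Set X}

lemma le_minkowskiContent_of_mul_le {K δ : ℝ} (hδ : 0 < δ)
    (h : ∀ ε ∈ Ioo 0 δ, ε * K ≤ μ.real (eNbhd Ω ε \ Ω)) :
    ENNReal.ofReal K ≤ minkowskiContent μ Ω := by
  refine le_liminf_of_le (by isBoundedDefault) ?_
  filter_upwards [Ioo_mem_nhdsGT hδ] with ε hε
  calc ENNReal.ofReal K ≤ ENNReal.ofReal (μ.real (eNbhd Ω ε \ Ω) / ε) :=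
        ENNReal.ofReal_le_ofReal ((le_div_iff₀ hε.1).2 (by linarith [h ε hε]))
    _ = ENNReal.ofReal (μ.real (eNbhd Ω ε \ Ω)) / ENNReal.ofReal ε :=
        ENNReal.ofReal_div_of_pos hε.1
    _ ≤ μ (eNbhd Ω ε \ Ω) / ENNReal.ofReal ε := by gcongr; exact ENNReal.ofReal_toReal_le

lemma NBrunnMinkowski.ofReal_rpow_le {N : ℝ} (hBM : NBrunnMinkowski μ N) (hN : 0 < N)
    {A B : Set X} (hA : MeasurableSet A) (hB : MeasurableSet B) (hA0 : 0 < μ A) (hB0 : 0 < μ B)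
    (hA_fin : μ A ≠ ⊤) (hB_fin : μ B ≠ ⊤) {s : ℝ} (hs : s ∈ Icc 0 1) :
    ENNReal.ofReal (((1 - s) * μ.real A ^ (1 / N) + s * μ.real B ^ (1 / N)) ^ N)
      ≤ μ (interpSet s A B) := by
  have hbm := hBM A B hA hB hA0 hB0 s hs
  obtain ⟨hs0, hs1⟩ := hs
  have h1s : 0 ≤ 1 - s := by linarith
  simp only [measureReal_def]
  rw [← ENNReal.ofReal_toReal hA_fin, ← ENNReal.ofReal_toReal hB_fin,
    ENNReal.ofReal_rpow_of_nonneg ENNReal.toReal_nonneg (by positivity),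
    ENNReal.ofReal_rpow_of_nonneg ENNReal.toReal_nonneg (by positivity),
    ← ENNReal.ofReal_mul h1s, ← ENNReal.ofReal_mul hs0,
    ← ENNReal.ofReal_add (by positivity) (by positivity)] at hbm
  have := ENNReal.rpow_le_rpow hbm hN.le
  rwa [← ENNReal.rpow_mul, one_div_mul_cancel hN.ne', ENNReal.rpow_one,
    ENNReal.ofReal_rpow_of_nonneg (by positivity) hN.le] at this

end Measure

section BrunnMinkowski

variable {X : Type*} [MetricSpace X] [MeasurableSpace X] [OpensMeasurableSpace X]
  {μ : Measure X} {N : ℝ} {Ω : Set X} {x₀ : X} {D R : ℝ}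

theorem NBrunnMinkowski.mul_le_measureReal_eNbhd_sdiff (hBM : NBrunnMinkowski μ N)
    (hN : 1 ≤ N) (hfin : ∀ r, 0 < r → μ (ball x₀ r) < ⊤) (hΩ : MeasurableSet Ω)
    (hΩ0 : 0 < μ Ω) (hΩD : Ω ⊆ ball x₀ D) (hDR : D ≤ R) {ε : ℝ} (hε : ε ∈ Ioo 0 (D + R)) :
    ε * (N * μ.real Ω ^ ((N - 1) / N) *
        ((μ.real (ball x₀ R) ^ (1 / N) - μ.real Ω ^ (1 / N)) / (D + R)))
      ≤ μ.real (eNbhd Ω ε \ Ω) := by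
  have hDR0 : 0 < D + R := hε.1.trans hε.2
  have hR : 0 < R := by linarith
  have hD : 0 < D := by
    obtain ⟨y, hy⟩ := nonempty_of_measure_ne_zero hΩ0.ne'
    exact pos_of_mem_ball (hΩD hy)
  set s := ε / (D + R) with hs_def
  have hs0 : 0 < s := div_pos hε.1 hDR0
  have hs1 : s ≤ 1 := (div_le_one hDR0).2 hε.2.le
  have hΩR : Ω ⊆ ball x₀ R := hΩD.trans (ball_subset_ball hDR)
  have hΩ_fin : μ Ω ≠ ⊤ := ((measure_mono hΩR).trans_lt (hfin R hR)).ne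
  have hnbhd_fin : μ (eNbhd Ω ε) ≠ ⊤ :=
    ((measure_mono (eNbhd_subset_ball hΩD ε)).trans_lt (hfin _ (by linarith [hε.1]))).ne
  have hinterp : interpSet s Ω (ball x₀ R) ⊆ eNbhd Ω ε := by
    simpa [hs_def, div_mul_cancel₀ _ hDR0.ne'] using interpSet_ball_subset_eNbhd hΩD hs0 R
  set a := μ.real Ω
  set b := μ.real (ball x₀ R)
  set c := (1 - s) * a ^ (1 / N) + s * b ^ (1 / N)
  have ha : 0 < a := ENNReal.toReal_pos hΩ0.ne' hΩ_fin
  have hc : 0 ≤ c := by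
    have : 0 ≤ 1 - s := by linarith
    positivity
  have hbm : c ^ N ≤ μ.real (eNbhd Ω ε) :=
    (ENNReal.ofReal_le_iff_le_toReal hnbhd_fin).1 <|
      (hBM.ofReal_rpow_le (by linarith) hΩ measurableSet_ball hΩ0
        (hΩ0.trans_le (measure_mono hΩR)) hΩ_fin (hfin R hR).ne ⟨hs0.le, hs1⟩).trans
      (measure_mono hinterp)
  have htangent := rpow_tangent_line_le (Real.rpow_pos_of_pos ha (1 / N)) hc hN
  have hdiff := le_measureReal_sdiff (μ := μ) (s₁ := eNbhd Ω ε) hΩ_fin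
  have hN0 : N ≠ 0 := by linarith
  rw [← Real.rpow_mul ha.le, ← Real.rpow_mul ha.le, one_div_mul_cancel hN0,
    Real.rpow_one] at htangent
  calc ε * (N * a ^ ((N - 1) / N) * ((b ^ (1 / N) - a ^ (1 / N)) / (D + R)))
      = N * a ^ (1 / N * (N - 1)) * (c - a ^ (1 / N)) := by
        rw [one_div_mul_eq_div]
        simp only [c, hs_def]
        field_simp
        ring
    _ ≤ μ.real (eNbhd Ω ε \ Ω) := by linarith

end BrunnMinkowski

theorem sharp_isoperimetric_inequality_general
    {X : Type*} [MetricSpace X] [MeasurableSpace X] [BorelSpace X]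
    (μ : Measure X) (N : ℝ) (hN : 1 < N)
    (hBM : NBrunnMinkowski μ N)
    (hfin : ∀ (x : X) (r : ℝ), 0 < r → μ (Metric.ball x r) < ⊤)
    (θ : ℝ)
    (hAVR : ∀ x : X,
      Tendsto (fun r : ℝ => (μ (Metric.ball x r)).toReal / (omegaN N * r ^ N))
        atTop (𝓝 θ))
    (Ω : Set X) (hbdd : Bornology.IsBounded Ω)
    (hmeas : MeasurableSet Ω) (h0 : 0 < μ Ω) :
    ENNReal.ofReal (N * omegaN N ^ (1 / N) * θ ^ (1 / N)) * μ Ω ^ ((N - 1) / N)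
      ≤ minkowskiContent μ Ω := by
  obtain ⟨x₀, -⟩ := nonempty_of_measure_ne_zero h0.ne'
  obtain ⟨D, hD, hΩD⟩ := hbdd.subset_ball_lt 0 x₀
  have hN0 : 0 < N := by linarith
  have hω : 0 < omegaN N :=
    div_pos (Real.rpow_pos_of_pos Real.pi_pos _) (Real.Gamma_pos_of_pos (by linarith))
  have hΩ_fin : μ Ω ≠ ⊤ := ((measure_mono hΩD).trans_lt (hfin x₀ D hD)).ne
  rw [← ofReal_measureReal hΩ_fin, ENNReal.ofReal_rpow_of_nonneg measureReal_nonneg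
    (div_nonneg (by linarith) hN0.le), ← ENNReal.ofReal_mul' (by positivity)]
  set a := μ.real Ω
  have hbound : ∀ R ≥ D, ENNReal.ofReal (N * a ^ ((N - 1) / N) *
      ((μ.real (ball x₀ R) ^ (1 / N) - a ^ (1 / N)) / (D + R))) ≤ minkowskiContent μ Ω :=
    fun R hR => le_minkowskiContent_of_mul_le (by linarith) fun ε hε =>
      hBM.mul_le_measureReal_eNbhd_sdiff hN.le (hfin x₀) hmeas h0 hΩD hR hε
  have hslope := (tendsto_sub_div_add_of_tendsto_div (a ^ (1 / N)) D
    (tendsto_rpow_inv_div_of_tendsto_div_rpow hN0 hω (fun _ => measureReal_nonneg)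
      (hAVR x₀))).const_mul (N * a ^ ((N - 1) / N))
  refine le_of_eq_of_le ?_ (le_of_tendsto ((ENNReal.continuous_ofReal.tendsto _).comp hslope)
    ((eventually_ge_atTop D).mono hbound))
  congr 1
  ring

/-- Sharp isoperimetric inequality in spaces satisfying the `N`-Brunn–Minkowski
inequality and having Euclidean volume growth:
`μ⁺(Ω) ≥ N ω_N^{1/N} θ^{1/N} μ(Ω)^{(N-1)/N}`. -/
theorem sharp_isoperimetric_inequality
    {X : Type*} [MetricSpace X] [MeasurableSpace X] [BorelSpace X]
    (μ : Measure X) (N : ℝ) (hN : 1 < N)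
    (hBM : NBrunnMinkowski μ N)
    (hfin : ∀ (x : X) (r : ℝ), 0 < r → μ (Metric.ball x r) < ⊤)
    (θ : ℝ) (hθ : 0 < θ)
    (hAVR : ∀ x : X,
      Tendsto (fun r : ℝ => (μ (Metric.ball x r)).toReal / (omegaN N * r ^ N))
        atTop (𝓝 θ))
    (Ω : Set X) (hne : Ω.Nonempty) (hbdd : Bornology.IsBounded Ω)
    (hmeas : MeasurableSet Ω) (h0 : 0 < μ Ω) (hfinΩ : μ Ω < ⊤) :
    ENNReal.ofReal (N * omegaN N ^ (1 / N) * θ ^ (1 / N)) * μ Ω ^ ((N - 1) / N)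
      ≤ minkowskiContent μ Ω :=
  sharp_isoperimetric_inequality_general μ N hN hBM hfin θ hAVR Ω hbdd hmeas h0
end

section
/- Let (X,d) be a metric space, μ a Borel measure on X, N > 1 a real number, and x₀ ∈ X. Assume that 0 < μ(B_{x₀}(r)) < ∞ for every r > 0, that the function r ↦ μ(B_{x₀}(r))/r^N is nonincreasing on (0,∞), and that μ(B_{x₀}(r))/(ω_N r^N) converges to some θ ≥ 0 as r → ∞. Then limsup_{r→∞} μ⁺(B_{x₀}(r)) / μ(B_{x₀}(r))^{(N−1)/N} ≤ N · ω_N^{1/N} · θ^{1/N}. -/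
open MeasureTheory Metric Filter Set
open scoped Topology ENNReal

/-!
Since `(B_r)_ε ⊆ B_{r+ε}`, the Minkowski content of a ball is at most the right derivative of any
function dominating `V(s) = μ(B_s)` for `s ≥ r` and touching it at `r`. Bishop–Gromov provides
`V(r) (s/r)^N`, so `μ⁺(B_r) ≤ N V(r)/r`, i.e. the isoperimetric ratio of `B_r` is at most
`N (V(r)/r^N)^{1/N}`, which tends to `N (ω_N θ)^{1/N}`.
-/

lemma omegaN_pos {N : ℝ} (hN : -2 < N) : 0 < omegaN N :=
  div_pos (Real.rpow_pos_of_pos Real.pi_pos _) (Real.Gamma_pos_of_pos (by linarith))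

lemma eNbhd_ball_subset_ball {X : Type*} [MetricSpace X] (x : X) (r ε : ℝ) :
    eNbhd (ball x r) ε ⊆ ball x (r + ε) := by
  rintro y ⟨z, hz, hyz⟩
  rw [mem_ball] at hz ⊢
  linarith [dist_triangle y z x]

section Balls

variable {X : Type*} [MetricSpace X] [MeasurableSpace X] [BorelSpace X] (μ : Measure X) (x : X)

lemma minkowskiContent_ball_le_of_hasDerivWithinAt {r f' : ℝ} {f : ℝ → ℝ}
    (hf0 : μ (ball x r) = ENNReal.ofReal (f 0))
    (hbound : ∀ ε > 0, μ (ball x (r + ε)) ≤ ENNReal.ofReal (f ε))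
    (hf : HasDerivWithinAt f f' (Ioi 0) 0) :
    minkowskiContent μ (ball x r) ≤ ENNReal.ofReal f' := by
  have hslope : Tendsto (fun ε => ENNReal.ofReal (slope f 0 ε)) (𝓝[>] 0) (𝓝 (ENNReal.ofReal f')) :=
    (ENNReal.continuous_ofReal.tendsto f').comp
      ((hasDerivWithinAt_iff_tendsto_slope' (lt_irrefl 0)).mp hf)
  have hle : ∀ᶠ ε in 𝓝[>] (0 : ℝ),
      μ (eNbhd (ball x r) ε \ ball x r) / ENNReal.ofReal ε ≤ ENNReal.ofReal (slope f 0 ε) := by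
    filter_upwards [self_mem_nhdsWithin] with ε (hε : 0 < ε)
    calc μ (eNbhd (ball x r) ε \ ball x r) / ENNReal.ofReal ε
        ≤ (μ (ball x (r + ε)) - μ (ball x r)) / ENNReal.ofReal ε := by
          gcongr
          rw [← measure_sdiff (ball_subset_ball (by linarith)) measurableSet_ball.nullMeasurableSet
            (hf0 ▸ ENNReal.ofReal_ne_top)]
          exact measure_mono (sdiff_subset_sdiff_left (eNbhd_ball_subset_ball x r ε))
      _ ≤ ENNReal.ofReal (f ε - f 0) / ENNReal.ofReal ε := by
          gcongr
          rw [hf0, tsub_le_iff_right]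
          calc μ (ball x (r + ε)) ≤ ENNReal.ofReal (f ε - f 0 + f 0) := by simpa using hbound ε hε
            _ ≤ ENNReal.ofReal (f ε - f 0) + ENNReal.ofReal (f 0) := ENNReal.ofReal_add_le
      _ = ENNReal.ofReal (slope f 0 ε) := by
          rw [← ENNReal.ofReal_div_of_pos hε, slope_def_field, sub_zero]
  exact (liminf_le_liminf hle).trans_eq hslope.liminf_eq

lemma minkowskiContent_ball_le_of_rpow_antitone {N r : ℝ} (hr : 0 < r)
    (hfin : ∀ r : ℝ, 0 < r → μ (ball x r) < ⊤)
    (hBG : ∀ r₁ r₂ : ℝ, 0 < r₁ → r₁ ≤ r₂ →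
      (μ (ball x r₂)).toReal / r₂ ^ N ≤ (μ (ball x r₁)).toReal / r₁ ^ N) :
    minkowskiContent μ (ball x r) ≤ ENNReal.ofReal (N * (μ (ball x r)).toReal / r) := by
  set m := (μ (ball x r)).toReal
  have hrN : 0 < r ^ N := Real.rpow_pos_of_pos hr N
  have hf : HasDerivAt (fun ε => m / r ^ N * (r + ε) ^ N) (m / r ^ N * (N * r ^ (N - 1))) 0 := by
    have hpow : HasDerivAt (· ^ N) (N * r ^ (N - 1)) (r + 0) := by
      rw [add_zero]; exact Real.hasDerivAt_rpow_const (Or.inl hr.ne')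
    simpa using (hpow.comp_const_add r 0).const_mul (m / r ^ N)
  have hf' : m / r ^ N * (N * r ^ (N - 1)) = N * m / r := by
    rw [Real.rpow_sub_one hr.ne']
    field_simp
  refine hf' ▸ minkowskiContent_ball_le_of_hasDerivWithinAt μ x ?_ (fun ε hε => ?_)
    hf.hasDerivWithinAt
  · rw [add_zero, div_mul_cancel₀ _ hrN.ne', ENNReal.ofReal_toReal (hfin r hr).ne]
  · have hs : 0 < r + ε := by linarith
    rw [← ENNReal.ofReal_toReal (hfin _ hs).ne]
    gcongr
    exact (div_le_iff₀ (Real.rpow_pos_of_pos hs N)).mp (hBG r (r + ε) hr (by linarith))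

lemma minkowskiContent_ball_div_rpow_le {N r : ℝ} (hN : N ≠ 0) (hr : 0 < r)
    (hpos : 0 < μ (ball x r)) (hfin : ∀ r : ℝ, 0 < r → μ (ball x r) < ⊤)
    (hBG : ∀ r₁ r₂ : ℝ, 0 < r₁ → r₁ ≤ r₂ →
      (μ (ball x r₂)).toReal / r₂ ^ N ≤ (μ (ball x r₁)).toReal / r₁ ^ N) :
    minkowskiContent μ (ball x r) / μ (ball x r) ^ ((N - 1) / N)
      ≤ ENNReal.ofReal (N * ((μ (ball x r)).toReal / r ^ N) ^ (1 / N)) := by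
  set m := (μ (ball x r)).toReal
  have hm : 0 < m := ENNReal.toReal_pos hpos.ne' (hfin r hr).ne
  have hμ : μ (ball x r) = ENNReal.ofReal m := (ENNReal.ofReal_toReal (hfin r hr).ne).symm
  have hmpow : 0 < m ^ ((N - 1) / N) := Real.rpow_pos_of_pos hm _
  have hsplit : m = m ^ (1 / N) * m ^ ((N - 1) / N) := by
    rw [← Real.rpow_add hm, ← add_div, add_sub_cancel, div_self hN, Real.rpow_one]
  have key : N * m / r / m ^ ((N - 1) / N) = N * (m / r ^ N) ^ (1 / N) := by
    rw [Real.div_rpow hm.le (Real.rpow_pos_of_pos hr N).le, ← Real.rpow_mul hr.le,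
      mul_one_div_cancel hN, Real.rpow_one]
    nth_rw 1 [hsplit]
    field_simp
  rw [hμ, ENNReal.ofReal_rpow_of_pos hm, ← key, ENNReal.ofReal_div_of_pos hmpow]
  gcongr
  exact minkowskiContent_ball_le_of_rpow_antitone μ x hr hfin hBG

end Balls

/-- Along large balls, the isoperimetric ratio is asymptotically at most
`N ω_N^{1/N} θ^{1/N}`:
`limsup_{r→∞} μ⁺(B_{x₀}(r)) / μ(B_{x₀}(r))^{(N-1)/N} ≤ N ω_N^{1/N} θ^{1/N}`. -/
theorem limsup_isoperimetric_ratio_balls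
    {X : Type*} [MetricSpace X] [MeasurableSpace X] [BorelSpace X]
    (μ : Measure X) (N : ℝ) (hN : 1 < N) (x₀ : X)
    (hpos : ∀ r : ℝ, 0 < r → 0 < μ (Metric.ball x₀ r))
    (hfin : ∀ r : ℝ, 0 < r → μ (Metric.ball x₀ r) < ⊤)
    (hBG : ∀ r₁ r₂ : ℝ, 0 < r₁ → r₁ ≤ r₂ →
      (μ (Metric.ball x₀ r₂)).toReal / r₂ ^ N ≤ (μ (Metric.ball x₀ r₁)).toReal / r₁ ^ N)
    (θ : ℝ) (hθ : 0 ≤ θ)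
    (hAVR : Tendsto (fun r : ℝ => (μ (Metric.ball x₀ r)).toReal / (omegaN N * r ^ N))
      atTop (𝓝 θ)) :
    Filter.limsup
        (fun r : ℝ =>
          minkowskiContent μ (Metric.ball x₀ r) / μ (Metric.ball x₀ r) ^ ((N - 1) / N))
        atTop
      ≤ ENNReal.ofReal (N * omegaN N ^ (1 / N) * θ ^ (1 / N)) := by
  have hω : 0 < omegaN N := omegaN_pos (by linarith)
  have hdensity : Tendsto (fun r => (μ (ball x₀ r)).toReal / r ^ N) atTop (𝓝 (omegaN N * θ)) :=
    (hAVR.const_mul (omegaN N)).congr fun r => by rw [mul_div_assoc', mul_div_mul_left _ _ hω.ne']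
  have hbound : Tendsto (fun r => ENNReal.ofReal (N * ((μ (ball x₀ r)).toReal / r ^ N) ^ (1 / N)))
      atTop (𝓝 (ENNReal.ofReal (N * omegaN N ^ (1 / N) * θ ^ (1 / N)))) := by
    rw [mul_assoc, ← Real.mul_rpow hω.le hθ]
    exact (ENNReal.continuous_ofReal.tendsto _).comp
      ((hdensity.rpow_const (Or.inr (by positivity))).const_mul N)
  refine (limsup_le_limsup ?_).trans_eq hbound.limsup_eq
  filter_upwards [eventually_gt_atTop 0] with r hr
  exact minkowskiContent_ball_div_rpow_le μ x₀ (by linarith) hr (hpos r hr) hfin hBG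
end

section
/- Let (X,d) be a metric space, μ a Borel measure on X, and N > 1 a real number. Assume (X,d,μ) satisfies the N-Brunn–Minkowski inequality. Let Ω ⊆ X be a nonempty bounded Borel set with 0 < μ(Ω) < ∞ and diameter d₀ = diam(Ω), let x₀ ∈ Ω and R > 0 be such that 0 < μ(B_{x₀}(R)) < ∞. Then the Minkowski content of Ω satisfies μ⁺(Ω) ≥ N · μ(Ω)^{(N−1)/N} · (μ(B_{x₀}(R))^{1/N} − μ(Ω)^{1/N}) / (d₀ + R). -/
/-!
Put `s = ε / (diam Ω + R)`. Every point of `Z_s(Ω, B_{x₀}(R))` lies within `s · d(x, y) < ε` of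
some `x ∈ Ω`, so `Z_s(Ω, B_{x₀}(R)) ⊆ Ω_ε`. Brunn–Minkowski bounds its measure below by
`((1 - s) μ(Ω)^{1/N} + s μ(B)^{1/N})^N`, and the tangent line of `t ↦ t^N` at `μ(Ω)^{1/N}` bounds
this below by `μ(Ω) + ε · C`, where `C` is the claimed constant. Hence `μ(Ω_ε \ Ω) ≥ C ε` for
all small `ε`.
-/

open MeasureTheory Metric Filter Set
open scoped Topology ENNReal

namespace Real

theorem rpow_add_mul_rpow_sub_one_le_rpow_add {a h p : ℝ} (ha : 0 < a) (hh : -a ≤ h)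
    (hp : 1 ≤ p) : a ^ p + p * a ^ (p - 1) * h ≤ (a + h) ^ p := by
  have hbern : 1 + p * (h / a) ≤ (1 + h / a) ^ p :=
    one_add_mul_self_le_rpow_one_add (by rwa [le_div_iff₀ ha, neg_one_mul]) hp
  calc a ^ p + p * a ^ (p - 1) * h = a ^ p * (1 + p * (h / a)) := by
        rw [rpow_sub_one ha.ne']; field_simp
    _ ≤ a ^ p * (1 + h / a) ^ p := by gcongr
    _ = (a + h) ^ p := by
        rw [← mul_rpow ha.le (by rw [← neg_le_iff_add_nonneg', le_div_iff₀ ha]; linarith)]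
        congr 1; field_simp

/-- The left side is the tangent line at `s = 0` of the right side, a convex function of `s`. -/
theorem add_mul_le_interp_rpow_inv_rpow {α β N s : ℝ} (hα : 0 < α) (hβ : 0 ≤ β) (hN : 1 ≤ N)
    (hs₀ : 0 ≤ s) (hs₁ : s ≤ 1) :
    α + N * α ^ ((N - 1) / N) * (β ^ (1 / N) - α ^ (1 / N)) * s
      ≤ ((1 - s) * α ^ (1 / N) + s * β ^ (1 / N)) ^ N := by
  have hN₀ : N ≠ 0 := by positivity
  have ha : 0 < α ^ (1 / N) := rpow_pos_of_pos hα _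
  have hb : 0 ≤ β ^ (1 / N) := rpow_nonneg hβ _
  have key := rpow_add_mul_rpow_sub_one_le_rpow_add ha
    (h := s * (β ^ (1 / N) - α ^ (1 / N))) (by nlinarith) hN
  rw [← rpow_mul hα.le, ← rpow_mul hα.le, one_div_mul_cancel hN₀, rpow_one,
    one_div_mul_eq_div] at key
  convert key using 1
  · ring
  · congr 1; ring

end Real

section MetricSpace

variable {X : Type*} [MetricSpace X]

theorem interpSet_subset_eNbhd {A B : Set X} {s ε : ℝ}
    (h : ∀ x ∈ A, ∀ y ∈ B, s * dist x y < ε) : interpSet s A B ⊆ eNbhd A ε := by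
  intro z hz
  simp only [interpSet, mem_iUnion, mem_ofPred_eq] at hz
  obtain ⟨x, hx, y, hy, hxz, -⟩ := hz
  exact ⟨x, hx, by rw [dist_comm, hxz]; exact h x hx y hy⟩

theorem dist_lt_diam_add_of_mem_ball {Ω : Set X} (hΩ : Bornology.IsBounded Ω) {x x₀ y : X}
    (hx : x ∈ Ω) (hx₀ : x₀ ∈ Ω) {R : ℝ} (hy : y ∈ ball x₀ R) : dist x y < diam Ω + R :=
  (dist_triangle x x₀ y).trans_lt
    (add_lt_add_of_le_of_lt (dist_le_diam_of_mem hΩ hx hx₀) (mem_ball'.mp hy))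

variable [MeasurableSpace X]

theorem ofReal_le_minkowskiContent {μ : Measure X} {Ω : Set X} {c : ℝ}
    (h : ∀ᶠ ε in 𝓝[>] (0 : ℝ), ENNReal.ofReal (c * ε) ≤ μ (eNbhd Ω ε \ Ω)) :
    ENNReal.ofReal c ≤ minkowskiContent μ Ω := by
  refine le_liminf_of_le (by isBoundedDefault) ?_
  filter_upwards [h, self_mem_nhdsWithin] with ε hε (hε₀ : 0 < ε)
  rwa [ENNReal.le_div_iff_mul_le (.inl (by simpa using hε₀)) (.inl ENNReal.ofReal_ne_top),
    ← ENNReal.ofReal_mul' hε₀.le]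

theorem NBrunnMinkowski.ofReal_rpow_le_measure_interpSet {μ : Measure X} {N : ℝ}
    (hBM : NBrunnMinkowski μ N) (hN : 0 < N) {A B : Set X} (hA : MeasurableSet A)
    (hB : MeasurableSet B) (hA₀ : 0 < μ A) (hB₀ : 0 < μ B) (hA_fin : μ A < ⊤)
    (hB_fin : μ B < ⊤) {s : ℝ} (hs : s ∈ Icc (0 : ℝ) 1) :
    ENNReal.ofReal (((1 - s) * (μ A).toReal ^ (1 / N) + s * (μ B).toReal ^ (1 / N)) ^ N)
      ≤ μ (interpSet s A B) := by
  have hA_pos : 0 < (μ A).toReal := ENNReal.toReal_pos hA₀.ne' hA_fin.ne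
  have hB_pos : 0 < (μ B).toReal := ENNReal.toReal_pos hB₀.ne' hB_fin.ne
  have hBM' := hBM A B hA hB hA₀ hB₀ s hs
  rw [← ENNReal.ofReal_toReal hA_fin.ne, ← ENNReal.ofReal_toReal hB_fin.ne,
    ENNReal.ofReal_rpow_of_pos hA_pos, ENNReal.ofReal_rpow_of_pos hB_pos,
    ← ENNReal.ofReal_mul (sub_nonneg.mpr hs.2), ← ENNReal.ofReal_mul hs.1,
    ← ENNReal.ofReal_add (by have := hs.2; positivity) (by have := hs.1; positivity)] at hBM'
  have := ENNReal.rpow_le_rpow hBM' hN.le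
  rwa [← ENNReal.rpow_mul, one_div_mul_cancel hN.ne', ENNReal.rpow_one,
    ENNReal.ofReal_rpow_of_nonneg (by have := hs.1; have := hs.2; positivity) hN.le] at this

end MetricSpace

theorem minkowskiContent_lower_bound_general
    {X : Type*} [MetricSpace X] [MeasurableSpace X] [BorelSpace X]
    (μ : Measure X) (N : ℝ) (hN : 1 < N)
    (hBM : NBrunnMinkowski μ N)
    (Ω : Set X) (hbdd : Bornology.IsBounded Ω)
    (hmeas : MeasurableSet Ω) (h0 : 0 < μ Ω) (hfinΩ : μ Ω < ⊤)
    (x₀ : X) (hx₀ : x₀ ∈ Ω) (R : ℝ) (hR : 0 < R)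
    (hpos : 0 < μ (Metric.ball x₀ R)) (hfin : μ (Metric.ball x₀ R) < ⊤) :
    ENNReal.ofReal (N * (μ Ω).toReal ^ ((N - 1) / N) *
        ((μ (Metric.ball x₀ R)).toReal ^ (1 / N) - (μ Ω).toReal ^ (1 / N)) /
        (Metric.diam Ω + R))
      ≤ minkowskiContent μ Ω := by
  have hD : 0 < diam Ω + R := add_pos_of_nonneg_of_pos diam_nonneg hR
  apply ofReal_le_minkowskiContent
  filter_upwards [Ioo_mem_nhdsGT hD] with ε ⟨hε₀, hεD⟩
  set s := ε / (diam Ω + R)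
  have hs : s ∈ Icc (0 : ℝ) 1 := ⟨by positivity, (div_le_one hD).mpr hεD.le⟩
  have hsub : interpSet s Ω (ball x₀ R) ⊆ eNbhd Ω ε := interpSet_subset_eNbhd fun x hx y hy =>
    calc s * dist x y < s * (diam Ω + R) := by
          gcongr; exact dist_lt_diam_add_of_mem_ball hbdd hx hx₀ hy
      _ = ε := div_mul_cancel₀ ε hD.ne'
  have htangent := Real.add_mul_le_interp_rpow_inv_rpow (ENNReal.toReal_pos h0.ne' hfinΩ.ne)
    ENNReal.toReal_nonneg hN.le hs.1 hs.2 (β := (μ (ball x₀ R)).toReal)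
  calc _ ≤ ENNReal.ofReal (((1 - s) * (μ Ω).toReal ^ (1 / N)
          + s * (μ (ball x₀ R)).toReal ^ (1 / N)) ^ N - (μ Ω).toReal) :=
        ENNReal.ofReal_le_ofReal (by rw [div_mul_eq_mul_div, mul_div_assoc]; linarith)
    _ ≤ μ (eNbhd Ω ε) - μ Ω := by
        rw [ENNReal.ofReal_sub _ ENNReal.toReal_nonneg, ENNReal.ofReal_toReal hfinΩ.ne]
        gcongr
        exact (hBM.ofReal_rpow_le_measure_interpSet (by linarith) hmeas measurableSet_ball h0
          hpos hfinΩ hfin hs).trans (measure_mono hsub)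
    _ ≤ μ (eNbhd Ω ε \ Ω) := le_measure_sdiff

/-- Lower bound for the Minkowski content coming from the Brunn–Minkowski inequality:
`μ⁺(Ω) ≥ N μ(Ω)^{(N-1)/N} (μ(B_{x₀}(R))^{1/N} − μ(Ω)^{1/N}) / (d₀ + R)`. -/
theorem minkowskiContent_lower_bound
    {X : Type*} [MetricSpace X] [MeasurableSpace X] [BorelSpace X]
    (μ : Measure X) (N : ℝ) (hN : 1 < N)
    (hBM : NBrunnMinkowski μ N)
    (Ω : Set X) (hne : Ω.Nonempty) (hbdd : Bornology.IsBounded Ω)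
    (hmeas : MeasurableSet Ω) (h0 : 0 < μ Ω) (hfinΩ : μ Ω < ⊤)
    (x₀ : X) (hx₀ : x₀ ∈ Ω) (R : ℝ) (hR : 0 < R)
    (hpos : 0 < μ (Metric.ball x₀ R)) (hfin : μ (Metric.ball x₀ R) < ⊤) :
    ENNReal.ofReal (N * (μ Ω).toReal ^ ((N - 1) / N) *
        ((μ (Metric.ball x₀ R)).toReal ^ (1 / N) - (μ Ω).toReal ^ (1 / N)) /
        (Metric.diam Ω + R))
      ≤ minkowskiContent μ Ω :=
  minkowskiContent_lower_bound_general μ N hN hBM Ω hbdd hmeas h0 hfinΩ x₀ hx₀ R hR hpos hfin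
end

section
/- Let (X,d) be a metric space, μ a Borel measure on X, N > 1 a real number, and x₀ ∈ X. Assume that μ(B_{x₀}(r)) < ∞ for all r > 0 and that the function r ↦ μ(B_{x₀}(r))/r^N is nonincreasing on (0,∞). Then for every r > 0 the Minkowski content of the ball B_{x₀}(r) satisfies μ⁺(B_{x₀}(r)) ≤ N · (μ(B_{x₀}(r))/r^N)^{1/N} · μ(B_{x₀}(r))^{(N−1)/N} = N · μ(B_{x₀}(r))/r. -/
open MeasureTheory Metric Filter Set
open scoped Topology ENNReal

/-- Upper bound for the Minkowski content of balls under the Bishop–Gromov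
monotonicity: `μ⁺(B_{x₀}(r)) ≤ N μ(B_{x₀}(r))/r`. -/
theorem minkowskiContent_ball_upper_bound
    {X : Type*} [MetricSpace X] [MeasurableSpace X] [BorelSpace X]
    (μ : Measure X) (N : ℝ) (hN : 1 < N) (x₀ : X)
    (hfin : ∀ r : ℝ, 0 < r → μ (Metric.ball x₀ r) < ⊤)
    (hBG : ∀ r₁ r₂ : ℝ, 0 < r₁ → r₁ ≤ r₂ →
      (μ (Metric.ball x₀ r₂)).toReal / r₂ ^ N ≤ (μ (Metric.ball x₀ r₁)).toReal / r₁ ^ N)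
    (r : ℝ) (hr : 0 < r) :
    minkowskiContent μ (Metric.ball x₀ r)
      ≤ ENNReal.ofReal (N * (μ (Metric.ball x₀ r)).toReal / r) := by

  set m := (μ (Metric.ball x₀ r)).toReal with hm
  have hrN : (0:ℝ) < r ^ N := Real.rpow_pos_of_pos hr N
  have hm0 : 0 ≤ m := ENNReal.toReal_nonneg
  -- the majorant
  set g : ℝ → ℝ≥0∞ := fun ε => ENNReal.ofReal ((m * ((r + ε) ^ N - r ^ N) / r ^ N) / ε) with hg
  have hev : ∀ᶠ ε in 𝓝[>] (0:ℝ),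
      μ (eNbhd (Metric.ball x₀ r) ε \ Metric.ball x₀ r) / ENNReal.ofReal ε ≤ g ε := by
    filter_upwards [self_mem_nhdsWithin] with ε (hε : 0 < ε)
    have hsub : eNbhd (Metric.ball x₀ r) ε ⊆ Metric.ball x₀ (r + ε) := by
      rintro x ⟨y, hy, hxy⟩
      have := Metric.mem_ball.mp hy
      exact Metric.mem_ball.mpr (by
        calc dist x x₀ ≤ dist x y + dist y x₀ := dist_triangle _ _ _
          _ < ε + r := by linarith
          _ = r + ε := by ring)
    have hball : Metric.ball x₀ r ⊆ Metric.ball x₀ (r + ε) :=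
      Metric.ball_subset_ball (by linarith)
    have h1 : μ (eNbhd (Metric.ball x₀ r) ε \ Metric.ball x₀ r)
        ≤ μ (Metric.ball x₀ (r + ε)) - μ (Metric.ball x₀ r) := by
      rw [← measure_diff hball measurableSet_ball.nullMeasurableSet (hfin r hr).ne]
      exact measure_mono (diff_subset_diff_left hsub)
    have hrε : 0 < r + ε := by linarith
    have hrεN : (0:ℝ) < (r + ε) ^ N := Real.rpow_pos_of_pos hrε N
    have h2 : (μ (Metric.ball x₀ (r + ε))).toReal ≤ m * (r + ε) ^ N / r ^ N := by
      have := hBG r (r + ε) hr (by linarith)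
      rw [div_le_div_iff₀ hrεN hrN] at this
      rw [le_div_iff₀ hrN]
      linarith
    have h2' : μ (Metric.ball x₀ (r + ε)) ≤ ENNReal.ofReal (m * (r + ε) ^ N / r ^ N) := by
      rw [← ENNReal.ofReal_toReal (hfin (r + ε) hrε).ne]
      exact ENNReal.ofReal_le_ofReal h2
    have h3 : μ (Metric.ball x₀ (r + ε)) - μ (Metric.ball x₀ r)
        ≤ ENNReal.ofReal (m * ((r + ε) ^ N - r ^ N) / r ^ N) := by
      have hmrw : μ (Metric.ball x₀ r) = ENNReal.ofReal m :=
        (ENNReal.ofReal_toReal (hfin r hr).ne).symm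
      rw [hmrw]
      calc μ (Metric.ball x₀ (r + ε)) - ENNReal.ofReal m
          ≤ ENNReal.ofReal (m * (r + ε) ^ N / r ^ N) - ENNReal.ofReal m :=
            tsub_le_tsub_right h2' _
        _ = ENNReal.ofReal (m * (r + ε) ^ N / r ^ N - m) := (ENNReal.ofReal_sub _ hm0).symm
        _ ≤ ENNReal.ofReal (m * ((r + ε) ^ N - r ^ N) / r ^ N) := by
            apply ENNReal.ofReal_le_ofReal
            rw [mul_sub, sub_div]
            have : m * r ^ N / r ^ N = m := by field_simp
            rw [this]
    calc μ (eNbhd (Metric.ball x₀ r) ε \ Metric.ball x₀ r) / ENNReal.ofReal ε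
        ≤ ENNReal.ofReal (m * ((r + ε) ^ N - r ^ N) / r ^ N) / ENNReal.ofReal ε :=
          ENNReal.div_le_div_right (le_trans h1 h3) _
      _ = g ε := by
          show _ = ENNReal.ofReal (m * ((r + ε) ^ N - r ^ N) / r ^ N / ε)
          exact (ENNReal.ofReal_div_of_pos hε).symm
  -- limit of the majorant
  have hderiv : HasDerivAt (fun x : ℝ => x ^ N) (N * r ^ (N - 1)) r :=
    Real.hasDerivAt_rpow_const (Or.inl hr.ne')
  have hslope : Tendsto (fun ε : ℝ => ((r + ε) ^ N - r ^ N) / ε) (𝓝[>] (0:ℝ))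
      (𝓝 (N * r ^ (N - 1))) := by
    have h1 : Tendsto (fun ε : ℝ => r + ε) (𝓝[>] (0:ℝ)) (𝓝[≠] r) := by
      apply tendsto_nhdsWithin_of_tendsto_nhds_of_eventually_within
      · have : Tendsto (fun ε : ℝ => r + ε) (𝓝 (0:ℝ)) (𝓝 (r + 0)) :=
          (continuous_const.add continuous_id).tendsto 0
        simpa using this.mono_left nhdsWithin_le_nhds
      · filter_upwards [self_mem_nhdsWithin] with ε (hε : 0 < ε)
        simp [hε.ne']
    have h2 := (hasDerivAt_iff_tendsto_slope.mp hderiv).comp h1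
    convert h2 using 2 with ε
    simp [slope_def_field, Function.comp]
  have hlim : Tendsto g (𝓝[>] (0:ℝ)) (𝓝 (ENNReal.ofReal (N * m / r))) := by
    apply ENNReal.tendsto_ofReal
    have : Tendsto (fun ε : ℝ => (m / r ^ N) * (((r + ε) ^ N - r ^ N) / ε)) (𝓝[>] (0:ℝ))
        (𝓝 ((m / r ^ N) * (N * r ^ (N - 1)))) := hslope.const_mul _
    have heq : (m / r ^ N) * (N * r ^ (N - 1)) = N * m / r := by
      have h1 : r ^ (N - 1) = r ^ N / r := by
        rw [Real.rpow_sub hr, Real.rpow_one]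
      rw [h1]; field_simp
    rw [heq] at this
    convert this using 2 with ε
    field_simp
  calc minkowskiContent μ (Metric.ball x₀ r)
      ≤ Filter.liminf g (𝓝[>] (0:ℝ)) := Filter.liminf_le_liminf hev
    _ = ENNReal.ofReal (N * m / r) := hlim.liminf_eq
end
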